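/- arXiv:1903.05613 — 2 statements merged into one kernel-verified Lean document; each statement's English description precedes it below -/
import Mathlib

section
/- Let G be a simple connected graph on p vertices with diameter d, L₀ ⊆ V(G) with |L₀| ≥ 2 and k = max_{x,y∈L₀} d(x,y). Suppose x₀, x₁, ..., x_{p−1} is an ordering of V(G) with x₀, x_{p−1} ∈ L₀ such that d(x_i, x_{i+1}) = d(x_i, L₀) + d(x_{i+1}, L₀) + k for all 0 ≤ i ≤ p−2, and define φ(x₀) = 0 and φ(x_{i+1}) = φ(x_i) + d + 1 − d(x_i, L₀) − d(x_{i+1}, L₀) − k. If φ is a radio labeling of G, then its span equals (p−1)(d−k+1) − 2·Σ_{v∈V(G)} d(v, L₀), and hence rn(G) = (p−1)(d−k+1) − 2·Σ_{v∈V(G)} d(v, L₀). -/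
/-!
In a radio labeling `ψ`, list the vertices as `y₀, …, y_{p-1}` in increasing order of label.
Going through nearest points of `L₀` gives `d(u, v) ≤ d(u, L₀) + d(v, L₀) + k`, so the radio
condition forces every gap `ψ y_{i+1} - ψ y_i` to be at least
`d + 1 - k - d(y_i, L₀) - d(y_{i+1}, L₀)`. Summing the gaps, each `d(v, L₀)` is subtracted at most
twice, whence `span ψ ≥ (p - 1)(d - k + 1) - 2 Σ_v d(v, L₀)`.
For the given `φ` each gap equals `d + 1 - d(x_i, x_{i+1}) ≥ 1`, so `φ` increases along the
ordering, its span is `φ x_{p-1} - φ x₀`, and the same sum is an equality because both endpoints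
lie in `L₀`.
-/

open SimpleGraph Finset

/-- The Petersen graph as the Kneser graph K(5,2). -/
def petersen : SimpleGraph {s : Finset (Fin 5) // s.card = 2} where
  Adj a b := Disjoint a.1 b.1
  symm := ⟨fun _ _ h => h.symm⟩
  loopless := ⟨fun a h => by
    have h0 : a.1 = ⊥ := disjoint_self.mp h
    have h2 := a.2
    rw [h0] at h2
    simp at h2⟩

/-- A radio labeling of `G`: for all distinct `u, v`,
`d(u,v) + |φ(u) - φ(v)| ≥ diam(G) + 1`. -/
def IsRadioLabeling {V : Type*} (G : SimpleGraph V) (φ : V → ℕ) : Prop :=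
  ∀ u v : V, u ≠ v → (G.diam : ℤ) + 1 ≤ (G.dist u v : ℤ) + |(φ u : ℤ) - (φ v : ℤ)|

/-- The span of a labeling: the maximum difference between two labels. -/
noncomputable def span {V : Type*} (φ : V → ℕ) : ℕ :=
  sSup (Set.range fun p : V × V => φ p.1 - φ p.2)

/-- The radio number of `G`: the minimum span over all radio labelings. -/
noncomputable def radioNumber {V : Type*} (G : SimpleGraph V) : ℕ :=
  sInf {s | ∃ φ : V → ℕ, IsRadioLabeling G φ ∧ span φ = s}

/-- `d(v, S)`: the minimum distance from `v` to a vertex of `S`. -/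
noncomputable def distToSet {V : Type*} (G : SimpleGraph V) (v : V) (S : Finset V) : ℕ :=
  sInf ((fun w => G.dist v w) '' ↑S)

/-- `diam(S)`: the maximum distance in `G` between two vertices of `S`. -/
noncomputable def setDiam {V : Type*} (G : SimpleGraph V) (S : Finset V) : ℕ :=
  sSup {d | ∃ x ∈ S, ∃ y ∈ S, G.dist x y = d}

namespace SimpleGraph

variable {V : Type*} {G : SimpleGraph V} {S : Finset V}

lemma distToSet_le_dist {v w : V} (hw : w ∈ S) : distToSet G v S ≤ G.dist v w :=
  Nat.sInf_le ⟨w, hw, rfl⟩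

lemma distToSet_eq_zero {v : V} (hv : v ∈ S) : distToSet G v S = 0 :=
  Nat.eq_zero_of_le_zero <| (distToSet_le_dist hv).trans_eq G.dist_self

lemma exists_mem_distToSet_eq (hS : S.Nonempty) (v : V) :
    ∃ w ∈ S, distToSet G v S = G.dist v w := by
  obtain ⟨w, hw, hval⟩ := Nat.sInf_mem ((Finset.coe_nonempty.2 hS).image fun w => G.dist v w)
  exact ⟨w, hw, hval.symm⟩

lemma dist_le_setDiam {a b : V} (ha : a ∈ S) (hb : b ∈ S) : G.dist a b ≤ setDiam G S :=
  le_csSup (S.finite_toSet.image2 _ S.finite_toSet).bddAbove ⟨a, ha, b, hb, rfl⟩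

lemma Connected.dist_le_distToSet_add_distToSet_add_setDiam (hG : G.Connected)
    (hS : S.Nonempty) (u v : V) :
    G.dist u v ≤ distToSet G u S + distToSet G v S + setDiam G S := by
  obtain ⟨w, hw, hu⟩ := exists_mem_distToSet_eq (G := G) hS u
  obtain ⟨w', hw', hv⟩ := exists_mem_distToSet_eq (G := G) hS v
  have hww' := dist_le_setDiam (G := G) hw hw'
  have h₁ : G.dist u v ≤ G.dist u w + G.dist w v := hG.dist_triangle
  have h₂ : G.dist w v ≤ G.dist w w' + G.dist w' v := hG.dist_triangle
  rw [G.dist_comm (u := w')] at h₂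
  omega

end SimpleGraph

namespace Fin

variable {m : ℕ}

lemma sum_univ_succ_sub_castSucc {M : Type*} [AddCommGroup M] (f : Fin (m + 1) → M) :
    ∑ t : Fin m, (f t.succ - f t.castSucc) = f (last m) - f 0 := by
  have h : f 0 + ∑ t : Fin m, f t.succ = ∑ t : Fin m, f t.castSucc + f (last m) :=
    (sum_univ_succ f).symm.trans (sum_univ_castSucc f)
  rw [Finset.sum_sub_distrib, sub_eq_sub_iff_add_eq_add, add_comm, h, add_comm]

/-- Each interior term is subtracted twice, the two endpoints once. -/
lemma sum_const_sub_castSucc_sub_succ (c : ℤ) (g : Fin (m + 1) → ℤ) :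
    ∑ t : Fin m, (c - g t.castSucc - g t.succ)
      = m * c - 2 * ∑ i, g i + g 0 + g (last m) := by
  simp only [Finset.sum_sub_distrib, Finset.sum_const, Finset.card_univ, Fintype.card_fin,
    nsmul_eq_mul]
  linear_combination sum_univ_succ g + sum_univ_castSucc g

end Fin

section Span

variable {V : Type*} (φ : V → ℕ)

lemma sub_le_span [Finite V] (u v : V) : φ u - φ v ≤ span φ :=
  le_csSup (Set.finite_range _).bddAbove ⟨(u, v), rfl⟩

lemma span_eq_of_forall_le {a b : V} (h : ∀ v, φ b ≤ φ v ∧ φ v ≤ φ a) :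
    span φ = φ a - φ b := by
  refine IsGreatest.csSup_eq ⟨⟨(a, b), rfl⟩, ?_⟩
  rintro _ ⟨⟨u, v⟩, rfl⟩
  have := (h u).2
  have := (h v).1
  dsimp only
  omega

end Span

lemma radioNumber_eq_span {V : Type*} {G : SimpleGraph V} {φ : V → ℕ}
    (hφ : IsRadioLabeling G φ) (hmin : ∀ ψ, IsRadioLabeling G ψ → span φ ≤ span ψ) :
    radioNumber G = span φ :=
  IsLeast.csInf_eq ⟨⟨φ, hφ, rfl⟩, by rintro _ ⟨ψ, hψ, rfl⟩; exact hmin ψ hψ⟩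

namespace IsRadioLabeling

variable {V : Type*} {G : SimpleGraph V} {S : Finset V} {ψ : V → ℕ}

lemma le_sub_of_le (hψ : IsRadioLabeling G ψ) (hG : G.Connected) (hS : S.Nonempty)
    {u v : V} (huv : u ≠ v) (hle : ψ u ≤ ψ v) :
    (G.diam : ℤ) - setDiam G S + 1 - distToSet G u S - distToSet G v S ≤ (ψ v : ℤ) - ψ u := by
  have hrad := hψ v u huv.symm
  have hdist := hG.dist_le_distToSet_add_distToSet_add_setDiam hS u v
  rw [G.dist_comm, abs_of_nonneg (by omega)] at hrad
  omega

lemma le_sub_of_monotone (hψ : IsRadioLabeling G ψ) (hG : G.Connected) (hS : S.Nonempty)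
    {m : ℕ} {y : Fin (m + 1) → V} (hy : Function.Injective y) (hmono : Monotone (ψ ∘ y)) :
    (m : ℤ) * ((G.diam : ℤ) - setDiam G S + 1) - 2 * ∑ i, (distToSet G (y i) S : ℤ)
      ≤ (ψ (y (Fin.last m)) : ℤ) - ψ (y 0) :=
  calc _ ≤ ∑ t : Fin m, ((G.diam : ℤ) - setDiam G S + 1
          - distToSet G (y t.castSucc) S - distToSet G (y t.succ) S) := by
        rw [Fin.sum_const_sub_castSucc_sub_succ _ fun i => (distToSet G (y i) S : ℤ)]
        omega
    _ ≤ ∑ t : Fin m, ((ψ (y t.succ) : ℤ) - ψ (y t.castSucc)) :=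
        Finset.sum_le_sum fun t _ =>
          hψ.le_sub_of_le hG hS (hy.ne t.castSucc_lt_succ.ne) (hmono t.castSucc_le_succ)
    _ = _ := Fin.sum_univ_succ_sub_castSucc fun i => (ψ (y i) : ℤ)

theorem card_sub_one_mul_sub_le_span [Fintype V] (hψ : IsRadioLabeling G ψ)
    (hG : G.Connected) (hS : S.Nonempty) :
    ((Fintype.card V : ℤ) - 1) * ((G.diam : ℤ) - setDiam G S + 1)
      - 2 * ∑ v, (distToSet G v S : ℤ) ≤ span ψ := by
  obtain ⟨m, hm⟩ : ∃ m, Fintype.card V = m + 1 :=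
    Nat.exists_eq_add_one.2 (Fintype.card_pos_iff.2 hG.nonempty)
  set e : Fin (m + 1) ≃ V := (Fintype.equivFinOfCardEq hm).symm
  set y : Fin (m + 1) → V := e ∘ Tuple.sort (ψ ∘ e)
  have hy : Function.Bijective y := e.bijective.comp (Tuple.sort (ψ ∘ e)).bijective
  have hmono : Monotone (ψ ∘ y) := Tuple.monotone_sort (ψ ∘ e)
  have hbound := hψ.le_sub_of_monotone hG hS hy.injective hmono
  have hspan := sub_le_span ψ (y (Fin.last m)) (y 0)
  have hle : ψ (y 0) ≤ ψ (y (Fin.last m)) := hmono (Fin.zero_le _)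
  rw [hy.sum_comp fun v => (distToSet G v S : ℤ)] at hbound
  zify [hle] at hspan
  rw [hm, Nat.cast_succ, add_sub_cancel_right]
  omega

end IsRadioLabeling

theorem stmt_4_general {V : Type*} [Fintype V] (G : SimpleGraph V) (hG : G.Connected)
    {m : ℕ} (hm : Fintype.card V = m + 1)
    (L₀ : Finset V)
    (x : Fin (m + 1) → V) (hx : Function.Bijective x)
    (hfirst : x 0 ∈ L₀) (hlast : x (Fin.last m) ∈ L₀)
    (hdist : ∀ t : Fin m, G.dist (x t.castSucc) (x t.succ)
      = distToSet G (x t.castSucc) L₀ + distToSet G (x t.succ) L₀ + setDiam G L₀)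
    (φ : V → ℕ)
    (hrec : ∀ t : Fin m, (φ (x t.succ) : ℤ) = (φ (x t.castSucc) : ℤ) + (G.diam : ℤ) + 1
      - (distToSet G (x t.castSucc) L₀ : ℤ) - (distToSet G (x t.succ) L₀ : ℤ)
      - (setDiam G L₀ : ℤ))
    (hradio : IsRadioLabeling G φ) :
    (span φ : ℤ) = ((Fintype.card V : ℤ) - 1) * ((G.diam : ℤ) - (setDiam G L₀ : ℤ) + 1)
        - 2 * ∑ v : V, (distToSet G v L₀ : ℤ)
    ∧ (radioNumber G : ℤ)
      = ((Fintype.card V : ℤ) - 1) * ((G.diam : ℤ) - (setDiam G L₀ : ℤ) + 1)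
        - 2 * ∑ v : V, (distToSet G v L₀ : ℤ) := by
  have hS : L₀.Nonempty := ⟨_, hfirst⟩
  have hdiam : G.ediam ≠ ⊤ := by
    have := hG.nonempty
    exact connected_iff_ediam_ne_top.1 hG
  have hstep : ∀ t : Fin m, (φ (x t.succ) : ℤ) - φ (x t.castSucc) = (G.diam : ℤ) - setDiam G L₀ + 1
      - distToSet G (x t.castSucc) L₀ - distToSet G (x t.succ) L₀ := fun t => by
    rw [hrec t]
    ring
  have hmono : Monotone (φ ∘ x) := Fin.monotone_iff_le_succ.2 fun t => by
    have := hstep t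
    have := hdist t
    have := G.dist_le_diam hdiam (u := x t.castSucc) (v := x t.succ)
    simp only [Function.comp_apply]
    omega
  have hspan : span φ = φ (x (Fin.last m)) - φ (x 0) :=
    span_eq_of_forall_le φ fun v => by
      obtain ⟨i, rfl⟩ := hx.surjective v
      exact ⟨hmono (Fin.zero_le i), hmono (Fin.le_last i)⟩
  have hle : φ (x 0) ≤ φ (x (Fin.last m)) := hmono (Fin.zero_le _)
  have hspan_eq : (span φ : ℤ) = ((Fintype.card V : ℤ) - 1) * ((G.diam : ℤ) - setDiam G L₀ + 1)
      - 2 * ∑ v, (distToSet G v L₀ : ℤ) := by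
    rw [hspan, Nat.cast_sub hle, ← Fin.sum_univ_succ_sub_castSucc fun i => (φ (x i) : ℤ),
      Finset.sum_congr rfl fun t _ => hstep t,
      Fin.sum_const_sub_castSucc_sub_succ _ fun i => (distToSet G (x i) L₀ : ℤ),
      hx.sum_comp fun v => (distToSet G v L₀ : ℤ), distToSet_eq_zero hfirst,
      distToSet_eq_zero hlast, hm, Nat.cast_succ, add_sub_cancel_right]
    ring
  refine ⟨hspan_eq, ?_⟩
  rw [radioNumber_eq_span hradio fun ψ hψ => ?_, hspan_eq]
  exact_mod_cast hspan_eq ▸ hψ.card_sub_one_mul_sub_le_span hG hS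

theorem stmt_4 {V : Type*} [Fintype V] (G : SimpleGraph V) (hG : G.Connected)
    {m : ℕ} (hm : Fintype.card V = m + 1)
    (L₀ : Finset V) (hL : 2 ≤ L₀.card)
    (x : Fin (m + 1) → V) (hx : Function.Bijective x)
    (hfirst : x 0 ∈ L₀) (hlast : x (Fin.last m) ∈ L₀)
    (hdist : ∀ t : Fin m, G.dist (x t.castSucc) (x t.succ)
      = distToSet G (x t.castSucc) L₀ + distToSet G (x t.succ) L₀ + setDiam G L₀)
    (φ : V → ℕ) (hφ0 : φ (x 0) = 0)
    (hrec : ∀ t : Fin m, (φ (x t.succ) : ℤ) = (φ (x t.castSucc) : ℤ) + (G.diam : ℤ) + 1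
      - (distToSet G (x t.castSucc) L₀ : ℤ) - (distToSet G (x t.succ) L₀ : ℤ)
      - (setDiam G L₀ : ℤ))
    (hradio : IsRadioLabeling G φ) :
    (span φ : ℤ) = ((Fintype.card V : ℤ) - 1) * ((G.diam : ℤ) - (setDiam G L₀ : ℤ) + 1)
        - 2 * ∑ v : V, (distToSet G v L₀ : ℤ)
    ∧ (radioNumber G : ℤ)
      = ((Fintype.card V : ℤ) - 1) * ((G.diam : ℤ) - (setDiam G L₀ : ℤ) + 1)
        - 2 * ∑ v : V, (distToSet G v L₀ : ℤ) :=
  stmt_4_general G hG hm L₀ x hx hfirst hlast hdist φ hrec hradio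
end

section
/- For odd n ≥ 3 and m ≥ 3, every radio labeling of P_n □ K_m has span at least (mn² − 2n + m + 2)/2; in particular the lower bound (mn² − 2n + m)/2 from the level-sum argument with L₀ the central K_m-fiber is not attained. -/
/-!
Write `n = 2c + 1` and let `L(v) = |p - c|` be the distance from `v = (u_{p+1}, v_j)` to the central
fibre. List the vertices by increasing label as `x₀, …, x_{N-1}`. Since
`d(x_i, x_{i+1}) ≤ L(x_i) + L(x_{i+1}) + 1` and `diam = n`, consecutive labels differ by at least
`n - L(x_i) - L(x_{i+1})`; summing, and using `∑ L = m c (c + 1)`, the span is at least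
`(mn² - 2n + m)/2 + L(x₀) + L(x_{N-1})` plus the total slack. A span below the claimed bound
therefore forces `L(x₀) = L(x_{N-1}) = 0` and every step to be tight, i.e. to jump between
different columns across the centre. Around an end vertex `x_k` (level `c`) the radio condition
for `x_{k-1}, x_{k+1}`, which then lie on the same side of the centre, forces one of them to be
central. So each of the `2m` end vertices is adjacent in the order to one of the `m` central
vertices, two of which (`x₀`, `x_{N-1}`) have only one neighbour in the order: `2m ≤ 2(m - 1)`.
-/

open SimpleGraph Finset

namespace SimpleGraph

theorem Walk.natDist_le_length_pathGraph {n : ℕ} {u v : Fin n} (w : (pathGraph n).Walk u v) :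
    Nat.dist u v ≤ w.length := by
  induction w with
  | nil => simp
  | @cons a b c hab _ ih =>
    have : Nat.dist a b = 1 := by
      rcases pathGraph_adj.mp hab with h | h <;> simp [Nat.dist, ← h]
    have := Nat.dist.triangle_inequality a b c
    rw [Walk.length_cons]; omega

theorem pathGraph_dist {n : ℕ} (u v : Fin n) : (pathGraph n).dist u v = Nat.dist u v := by
  refine le_antisymm ?_ ?_
  · wlog huv : u ≤ v generalizing u v
    · rw [dist_comm, Nat.dist_comm]; exact this v u (le_of_not_ge huv)
    obtain ⟨k, hk⟩ := Nat.exists_eq_add_of_le huv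
    induction k generalizing v with
    | zero => simp [Fin.ext (by omega : (v : ℕ) = u)]
    | succ k ih =>
      let v' : Fin n := ⟨u + k, by omega⟩
      have hadj : (pathGraph n).Adj v' v := pathGraph_adj.mpr (Or.inl (by simp [v']; omega))
      have huv' : (pathGraph n).dist u v' ≤ Nat.dist u v' :=
        ih v' (Fin.le_iff_val_le_val.mpr (by simp [v'])) rfl
      calc (pathGraph n).dist u v ≤ (pathGraph n).dist u v' + (pathGraph n).dist v' v :=
            hadj.reachable.dist_triangle_right u
        _ ≤ Nat.dist u v' + 1 := by rw [dist_eq_one_iff_adj.mpr hadj]; omega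
        _ = Nat.dist u v := by simp [Nat.dist, v']; omega
  · obtain ⟨w, hw⟩ := (pathGraph_preconnected n u v).exists_walk_length_eq_dist
    exact hw ▸ w.natDist_le_length_pathGraph

theorem Preconnected.dist_boxProd {α β : Type*} {G : SimpleGraph α} {H : SimpleGraph β}
    (hG : G.Preconnected) (hH : H.Preconnected) (x y : α × β) :
    (G □ H).dist x y = G.dist x.1 y.1 + H.dist x.2 y.2 := by
  have h := edist_boxProd (G := G) (H := H) x y
  rw [← (hG.boxProd hH x y).coe_dist_eq_edist, ← (hG x.1 y.1).coe_dist_eq_edist,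
    ← (hH x.2 y.2).coe_dist_eq_edist] at h
  exact_mod_cast h

theorem dist_pathGraph_boxProd_top {n m : ℕ} (x y : Fin n × Fin m) :
    (pathGraph n □ (⊤ : SimpleGraph (Fin m))).dist x y =
      Nat.dist x.1 y.1 + if x.2 = y.2 then 0 else 1 := by
  rw [(pathGraph_preconnected n).dist_boxProd preconnected_top, pathGraph_dist, dist_top]

theorem ediam_pathGraph_boxProd_top_ne_top {n m : ℕ} (hn : 0 < n) (hm : 0 < m) :
    (pathGraph n □ (⊤ : SimpleGraph (Fin m))).ediam ≠ ⊤ := by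
  obtain ⟨k, rfl⟩ : ∃ k, n = k + 1 := ⟨n - 1, by omega⟩
  have : Nonempty (Fin m) := ⟨⟨0, hm⟩⟩
  exact connected_iff_ediam_ne_top.mp ((pathGraph_connected k).boxProd connected_top)

theorem le_diam_pathGraph_boxProd_top {n m : ℕ} (hn : 0 < n) (hm : 2 ≤ m) :
    n ≤ (pathGraph n □ (⊤ : SimpleGraph (Fin m))).diam := by
  obtain ⟨k, rfl⟩ : ∃ k, n = k + 1 := ⟨n - 1, by omega⟩
  have h := dist_le_diam (ediam_pathGraph_boxProd_top_ne_top (m := m) (Nat.succ_pos k) (by omega))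
    (u := (0, ⟨0, by omega⟩)) (v := (Fin.last _, ⟨1, by omega⟩))
  simpa [dist_pathGraph_boxProd_top, Nat.dist] using h

end SimpleGraph

theorem IsRadioLabeling.injective {V : Type*} {G : SimpleGraph V} {φ : V → ℕ}
    (hφ : IsRadioLabeling G φ) (hG : G.ediam ≠ ⊤) : Function.Injective φ := by
  intro u v huv
  by_contra hne
  have := hφ u v hne
  have := dist_le_diam hG (u := u) (v := v)
  simp only [huv, sub_self, abs_zero, add_zero] at *
  omega

theorem le_span {V : Type*} [Finite V] (φ : V → ℕ) (u v : V) : φ u - φ v ≤ span φ :=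
  le_csSup (Set.finite_range _).bddAbove ⟨(u, v), rfl⟩

/-- `x 0, …, x (card V - 1)` enumerate `V` (the sum condition says the enumeration is bijective)
in increasing order of `φ`. -/
def IsLabelOrder {V : Type*} [Fintype V] (φ : V → ℕ) (x : ℕ → V) : Prop :=
  StrictMonoOn (φ ∘ x) (Set.Iio (Fintype.card V)) ∧
    ∀ f : V → ℕ, ∑ k ∈ range (Fintype.card V), f (x k) = ∑ v, f v

theorem exists_isLabelOrder {V : Type*} [Fintype V] [Nonempty V] {φ : V → ℕ}
    (hφ : Function.Injective φ) : ∃ x, IsLabelOrder φ x := by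
  let _ : LinearOrder V := LinearOrder.lift' φ hφ
  let e := Fintype.orderIsoFinOfCardEq V rfl
  let x : ℕ → V := fun k => if h : k < Fintype.card V then e ⟨k, h⟩ else Classical.arbitrary V
  have hx : ∀ i : Fin (Fintype.card V), x i = e i := fun i => dif_pos i.isLt
  refine ⟨x, fun i hi j hj hij => ?_, fun f => ?_⟩
  · show φ (x i) < φ (x j)
    rw [hx ⟨i, hi⟩, hx ⟨j, hj⟩]
    exact e.strictMono (show (⟨i, hi⟩ : Fin _) < ⟨j, hj⟩ from hij)
  · rw [← Fin.sum_univ_eq_sum_range (fun k => f (x k))]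
    simp only [hx]
    exact e.toEquiv.sum_comp f

theorem IsLabelOrder.card_filter {V : Type*} [Fintype V] {φ : V → ℕ} {x : ℕ → V}
    (hx : IsLabelOrder φ x) (Q : V → Prop) [DecidablePred Q] :
    #{k ∈ range (Fintype.card V) | Q (x k)} = #{v | Q v} := by
  simpa only [Finset.card_filter] using hx.2 (fun v => if Q v then 1 else 0)

theorem IsLabelOrder.add_one_le_dist_add {V : Type*} [Fintype V] {G : SimpleGraph V}
    {φ : V → ℕ} {x : ℕ → V} (hx : IsLabelOrder φ x) (hφ : IsRadioLabeling G φ) {D : ℕ}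
    (hD : D ≤ G.diam) {i j : ℕ} (hij : i < j) (hj : j < Fintype.card V) :
    (D : ℤ) + 1 ≤ G.dist (x i) (x j) + ((φ (x j) : ℤ) - φ (x i)) := by
  have hlt : φ (x i) < φ (x j) := hx.1 (Set.mem_Iio.mpr (hij.trans hj)) (Set.mem_Iio.mpr hj) hij
  have := hφ (x i) (x j) fun h => hlt.ne (congrArg φ h)
  rw [abs_sub_comm, abs_of_pos (by omega)] at this
  omega

theorem sub_eq_levelSum_add_slack (F L : ℕ → ℤ) (D : ℤ) (K : ℕ) :
    F K - F 0 = K * D - 2 * ∑ i ∈ range (K + 1), L i + L 0 + L K +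
      ∑ i ∈ range K, (F (i + 1) - F i - (D - L i - L (i + 1))) := by
  have hL := sum_range_succ L K
  have hL' := sum_range_succ' L K
  rw [sum_sub_distrib, sum_range_sub, sum_sub_distrib, sum_sub_distrib, sum_const, card_range,
    nsmul_eq_mul]
  linarith

theorem sum_dist_center (c : ℕ) : ∑ p : Fin (2 * c + 1), Nat.dist p c = c * (c + 1) := by
  rw [Fin.sum_univ_eq_sum_range (fun p => Nat.dist p c)]
  induction c with
  | zero => simp
  | succ c ih =>
    rw [show 2 * (c + 1) + 1 = 2 * c + 1 + 1 + 1 by ring, sum_range_succ, sum_range_succ']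
    simp only [Nat.dist_succ_succ, ih]
    have h1 : Nat.dist (2 * c + 1) c = c + 1 := by simp only [Nat.dist]; omega
    have h2 : Nat.dist 0 (c + 1) = c + 1 := by simp [Nat.dist]
    rw [h1, h2]
    ring

theorem card_le_of_forall_adjacent_mem {C E : Finset ℕ} {K : ℕ} (h0 : 0 ∈ C) (hK : K ∈ C)
    (hE : ∀ k ∈ E, 0 < k ∧ k < K ∧ (k - 1 ∈ C ∨ k + 1 ∈ C)) : #E + 2 ≤ 2 * #C := by
  have hsub : E ⊆ (C.erase K).image (· + 1) ∪ (C.erase 0).image (· - 1) := by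
    intro k hk
    obtain ⟨hk0, hkK, hk | hk⟩ := hE k hk
    · exact mem_union_left _ (mem_image.mpr ⟨k - 1, mem_erase.mpr ⟨by omega, hk⟩, by omega⟩)
    · exact mem_union_right _ (mem_image.mpr ⟨k + 1, mem_erase.mpr ⟨by omega, hk⟩, by omega⟩)
  have := (card_le_card hsub).trans (card_union_le _ _)
  have := card_image_le (s := C.erase K) (f := (· + 1))
  have := card_image_le (s := C.erase 0) (f := (· - 1))
  rw [card_erase_of_mem hK] at *
  rw [card_erase_of_mem h0] at *
  have := card_pos.mpr ⟨0, h0⟩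
  omega

/-- `L(v) = d(v, L₀)` when `n = 2c + 1`: vertex `(i, j)` is `(u_{i+1}, v_j)` and `L₀` is the fibre over
position `c`. -/
def level {n m : ℕ} (c : ℕ) (v : Fin n × Fin m) : ℕ := Nat.dist v.1 c

theorem dist_le_level_add_level {n m : ℕ} (c : ℕ) (u v : Fin n × Fin m) :
    (pathGraph n □ (⊤ : SimpleGraph (Fin m))).dist u v ≤ level c u + level c v + 1 := by
  rw [dist_pathGraph_boxProd_top]
  have := Nat.dist.triangle_inequality u.1 c v.1
  simp only [level, Nat.dist_comm c] at *
  split <;> omega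

theorem level_eq_zero_or_of_tight {c m : ℕ} {u v w : Fin (2 * c + 1) × Fin m}
    (hv : level c v = c)
    (huv : (pathGraph (2 * c + 1) □ (⊤ : SimpleGraph (Fin m))).dist u v =
      level c u + level c v + 1)
    (hvw : (pathGraph (2 * c + 1) □ (⊤ : SimpleGraph (Fin m))).dist v w =
      level c v + level c w + 1)
    (huw : level c u + level c w ≤ (pathGraph (2 * c + 1) □ (⊤ : SimpleGraph (Fin m))).dist u w) :
    level c u = 0 ∨ level c w = 0 := by
  -- `v` is an end of the path and both tight steps cross the centre, so `u` and `w` lie on the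
  -- same side of it and `d(u, w) ≤ |L u - L w| + 1`.
  have h := dist_pathGraph_boxProd_top u v
  have h' := dist_pathGraph_boxProd_top v w
  have h'' := dist_pathGraph_boxProd_top u w
  have := v.1.isLt
  simp only [level] at *
  have hb : (v.1 : ℕ) = 0 ∨ (v.1 : ℕ) = 2 * c := by simp only [Nat.dist] at hv; omega
  have := u.1.isLt; have := w.1.isLt
  split_ifs at h h' h'' <;> rcases hb with hb | hb <;> simp only [hb, Nat.dist] at * <;> omega

theorem sum_level (c m : ℕ) : ∑ v : Fin (2 * c + 1) × Fin m, level c v = m * (c * (c + 1)) := by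
  simp [Fintype.sum_prod_type_right, level, sum_dist_center]

theorem card_level_eq_zero (c m : ℕ) : #{v : Fin (2 * c + 1) × Fin m | level c v = 0} = m := by
  have : ({v | level c v = 0} : Finset (Fin (2 * c + 1) × Fin m)) =
      ({⟨c, by omega⟩} : Finset (Fin (2 * c + 1))) ×ˢ univ := by
    ext ⟨p, j⟩
    simp only [mem_filter_univ, mem_product, mem_singleton, mem_univ, and_true]
    simp only [level, Fin.ext_iff, Nat.dist]
    omega
  simp [this]

theorem card_level_eq_self {c : ℕ} (hc : 0 < c) (m : ℕ) :
    #{v : Fin (2 * c + 1) × Fin m | level c v = c} = 2 * m := by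
  have : ({v | level c v = c} : Finset (Fin (2 * c + 1) × Fin m)) =
      ({0, Fin.last _} : Finset (Fin (2 * c + 1))) ×ˢ univ := by
    ext ⟨p, j⟩
    simp only [mem_filter_univ, mem_product, mem_insert, mem_singleton, mem_univ, and_true]
    simp only [level, Fin.ext_iff, Fin.val_zero, Fin.val_last, Nat.dist]
    omega
  rw [this, card_product, card_pair (by simp [Fin.ext_iff]; omega)]
  simp

/-- The level-sum bound is attained by the order `x`: it starts and ends in the central fibre, and
every gap between consecutive labels is as small as `d(x i, x (i + 1)) ≤ L(x i) + L(x (i + 1)) + 1`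
allows. -/
def IsTightOrder {n m : ℕ} (c : ℕ) (φ : Fin n × Fin m → ℕ) (x : ℕ → Fin n × Fin m) : Prop :=
  level c (x 0) = 0 ∧ level c (x (n * m - 1)) = 0 ∧
    ∀ i < n * m - 1, (φ (x (i + 1)) : ℤ) - φ (x i) = n - level c (x i) - level c (x (i + 1))

section Tight

variable {c m : ℕ} {φ : Fin (2 * c + 1) × Fin m → ℕ} {x : ℕ → Fin (2 * c + 1) × Fin m}

theorem IsLabelOrder.isTightOrder_of_two_mul_span_lt (hm : 2 ≤ m)
    (hφ : IsRadioLabeling (pathGraph (2 * c + 1) □ (⊤ : SimpleGraph (Fin m))) φ)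
    (hx : IsLabelOrder φ x)
    (hspan : 2 * (span φ : ℤ) < (m : ℤ) * (2 * c + 1 : ℕ) ^ 2 - 2 * (2 * c + 1 : ℕ) + m + 2) :
    IsTightOrder c φ x := by
  set K := (2 * c + 1) * m - 1
  have hN : 1 ≤ (2 * c + 1) * m := Nat.one_le_iff_ne_zero.mpr (by positivity)
  have hcard : Fintype.card (Fin (2 * c + 1) × Fin m) = K + 1 := by simp [K]; omega
  set F : ℕ → ℤ := fun k => φ (x k)
  set ℓ : ℕ → ℤ := fun k => level c (x k)
  set s : ℕ → ℤ := fun i => F (i + 1) - F i - ((2 * c + 1 : ℕ) - ℓ i - ℓ (i + 1))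
  have hs : ∀ i ∈ range K, 0 ≤ s i := by
    intro i hi
    have := hx.add_one_le_dist_add hφ (le_diam_pathGraph_boxProd_top (by omega) hm)
      (Nat.lt_add_one i) (by rw [hcard]; simpa using hi)
    have := dist_le_level_add_level c (x i) (x (i + 1))
    simp only [s, F, ℓ]
    omega
  have hℓ : ∑ k ∈ range (K + 1), ℓ k = m * (c * (c + 1)) := by
    rw [← hcard]
    simp only [ℓ]
    exact_mod_cast (hx.2 (level c)).trans (sum_level c m)
  have hFK : F K - F 0 ≤ span φ := by
    have := le_span φ (x K) (x 0)
    simp only [F]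
    omega
  have hbound : 2 * ((K : ℤ) * (2 * c + 1 : ℕ) - 2 * (m * (c * (c + 1)))) =
      m * (2 * c + 1 : ℕ) ^ 2 - 2 * (2 * c + 1 : ℕ) + m := by
    simp only [K]; push_cast [hN]; ring
  have hid : F K - F 0 = K * (2 * c + 1 : ℕ) - 2 * ∑ k ∈ range (K + 1), ℓ k + ℓ 0 + ℓ K +
      ∑ i ∈ range K, s i := sub_eq_levelSum_add_slack F ℓ _ K
  have hℓ0 : 0 ≤ ℓ 0 := by positivity
  have hℓK : 0 ≤ ℓ K := by positivity
  have hzero : ℓ 0 + ℓ K + ∑ i ∈ range K, s i ≤ 0 := by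
    rw [hℓ] at hid
    linarith [sum_nonneg hs]
  refine ⟨by simpa [ℓ] using (by linarith [sum_nonneg hs] : ℓ 0 = 0),
    by simpa [ℓ] using (by linarith [sum_nonneg hs] : ℓ K = 0), fun i hi => ?_⟩
  have := (sum_eq_zero_iff_of_nonneg hs).mp (by linarith [sum_nonneg hs]) i (mem_range.mpr hi)
  simp only [s, F, ℓ] at this
  linarith

theorem IsTightOrder.neighbor_level_eq_zero (hc : 0 < c) (hm : 2 ≤ m)
    (hφ : IsRadioLabeling (pathGraph (2 * c + 1) □ (⊤ : SimpleGraph (Fin m))) φ)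
    (hx : IsLabelOrder φ x) (ht : IsTightOrder c φ x) {k : ℕ} (hk : k < (2 * c + 1) * m)
    (hkc : level c (x k) = c) :
    0 < k ∧ k < (2 * c + 1) * m - 1 ∧ (level c (x (k - 1)) = 0 ∨ level c (x (k + 1)) = 0) := by
  obtain ⟨h0, hK, hgap⟩ := ht
  have hcard : Fintype.card (Fin (2 * c + 1) × Fin m) = (2 * c + 1) * m := by simp
  have hradio {i j : ℕ} (hij : i < j) (hj : j < (2 * c + 1) * m) :=
    hx.add_one_le_dist_add hφ (le_diam_pathGraph_boxProd_top (by omega) hm) hij (hcard ▸ hj)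
  have htight : ∀ i < (2 * c + 1) * m - 1,
      (pathGraph (2 * c + 1) □ (⊤ : SimpleGraph (Fin m))).dist (x i) (x (i + 1)) =
        level c (x i) + level c (x (i + 1)) + 1 := by
    intro i hi
    have := hradio (Nat.lt_add_one i) (by omega)
    have := dist_le_level_add_level c (x i) (x (i + 1))
    have := hgap i hi
    omega
  have hk0 : 0 < k := Nat.pos_of_ne_zero (by rintro rfl; omega)
  have hkK : k < (2 * c + 1) * m - 1 := lt_of_le_of_ne (by omega) (by rintro rfl; omega)
  have hk1 : k - 1 + 1 = k := Nat.sub_add_cancel hk0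
  refine ⟨hk0, hkK, level_eq_zero_or_of_tight hkc ?_ (htight k hkK) ?_⟩
  · simpa only [hk1] using htight (k - 1) (by omega)
  · have := hradio (show k - 1 < k + 1 by omega) (by omega)
    have := hgap (k - 1) (by omega)
    have := hgap k hkK
    simp only [hk1] at *
    push_cast at *
    omega

theorem not_isTightOrder (hc : 0 < c) (hm : 2 ≤ m)
    (hφ : IsRadioLabeling (pathGraph (2 * c + 1) □ (⊤ : SimpleGraph (Fin m))) φ)
    (hx : IsLabelOrder φ x) : ¬ IsTightOrder c φ x := by
  intro ht
  set N := (2 * c + 1) * m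
  have hN : 0 < N := by positivity
  have := card_le_of_forall_adjacent_mem (C := {k ∈ range N | level c (x k) = 0})
    (E := {k ∈ range N | level c (x k) = c}) (K := N - 1)
    (mem_filter.mpr ⟨mem_range.mpr hN, ht.1⟩) (mem_filter.mpr ⟨mem_range.mpr (by omega), ht.2.1⟩)
    fun k hk => by
      obtain ⟨hkN, hkc⟩ := mem_filter.mp hk
      obtain ⟨hk0, hkK, hadj⟩ := ht.neighbor_level_eq_zero hc hm hφ hx (mem_range.mp hkN) hkc
      refine ⟨hk0, hkK, hadj.imp (fun h => mem_filter.mpr ⟨mem_range.mpr ?_, h⟩)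
        (fun h => mem_filter.mpr ⟨mem_range.mpr ?_, h⟩)⟩ <;> omega
  have hcard : Fintype.card (Fin (2 * c + 1) × Fin m) = N := by simp [N]
  rw [← hcard, hx.card_filter (level c · = c), hx.card_filter (level c · = 0),
    card_level_eq_zero, card_level_eq_self hc] at this
  omega

end Tight

theorem stmt_15 (n m : ℕ) (hn : 3 ≤ n) (ho : Odd n) (hm : 3 ≤ m)
    (φ : Fin n × Fin m → ℕ)
    (hφ : IsRadioLabeling (pathGraph n □ (⊤ : SimpleGraph (Fin m))) φ) :
    (m : ℤ) * n ^ 2 - 2 * n + m + 2 ≤ 2 * (span φ : ℤ) := by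
  obtain ⟨c, rfl⟩ := ho
  have : Nonempty (Fin (2 * c + 1) × Fin m) := ⟨(0, ⟨0, by omega⟩)⟩
  obtain ⟨x, hx⟩ := exists_isLabelOrder
    (hφ.injective (ediam_pathGraph_boxProd_top_ne_top (by omega) (by omega)))
  by_contra! hspan
  exact not_isTightOrder (by omega) (by omega) hφ hx
    (hx.isTightOrder_of_two_mul_span_lt (by omega) hφ hspan)
end
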